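/- Let H be a complex Hilbert space, h₁,…,h_K ∈ H, and S = span{h₁,…,h_K}. Suppose (v₁,…,v_K) ∈ H^K satisfies the power constraint Σ_k ‖v_k‖² = P for some P > 0, and that for some index k₀ the vector v_{k₀} ∉ S. Assume further that ⟪h_j, (v_j projected onto S)⟫ ≠ 0 for at least one j. Then there exists (w₁,…,w_K) ∈ H^K with Σ_k ‖w_k‖² = P such that Σ_j log₂(1 + A_j|⟪h_j, w_j⟫|² / (Σ_{i≠j} A_i|⟪h_j, w_i⟫|² + σ_j²)) > Σ_j log₂(1 + A_j|⟪h_j, v_j⟫|² / (Σ_{i≠j} A_i|⟪h_j, v_i⟫|² + σ_j²)), where A_j > 0 and σ_j² > 0 are fixed constants. -/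

import Mathlib

open scoped InnerProductSpace
open Finset

/-!
Only the inner products `⟪h j, v i⟫` enter the rates, and they do not see the component of `v i`
orthogonal to `S = span {h j}`. Dropping that component frees power (it is strictly positive for
`v k₀ ∉ S`), so the projections can be scaled by `√c` with `c = P / ∑ ‖p k‖² > 1` while keeping
the total power `P`. Multiplying every channel gain by `c` is the same as dividing every noise
power by `c`, which weakly increases each rate and strictly increases one with a nonzero signal.
-/

lemma div_add_le_mul_div_mul_add {a I σ c : ℝ} (hc : 1 ≤ c) (ha : 0 ≤ a) (hI : 0 ≤ I)
    (hσ : 0 < σ) : a / (I + σ) ≤ c * a / (c * I + σ) := by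
  have hc₀ : 0 < c := by linarith
  rw [show c * a / (c * I + σ) = a / (I + σ / c) by field_simp]
  exact div_le_div_of_nonneg_left ha (by positivity) (by gcongr; exact div_le_self hσ.le hc)

lemma div_add_lt_mul_div_mul_add {a I σ c : ℝ} (hc : 1 < c) (ha : 0 < a) (hI : 0 ≤ I)
    (hσ : 0 < σ) : a / (I + σ) < c * a / (c * I + σ) := by
  have hc₀ : 0 < c := by linarith
  rw [show c * a / (c * I + σ) = a / (I + σ / c) by field_simp]
  exact div_lt_div_of_pos_left ha (by positivity) (by gcongr; exact div_lt_self hσ hc)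

section SumRate

variable {K : ℕ} (A σsq : Fin K → ℝ)

/-- The sum spectral efficiency as a function of the channel gains `g j i = ‖⟪h j, w i⟫‖²`. -/
noncomputable def sumRate (g : Fin K → Fin K → ℝ) : ℝ :=
  ∑ j, Real.logb 2 (1 + A j * g j j / (∑ i ∈ univ.erase j, A i * g j i + σsq j))

variable {A σsq}

lemma sumRate_lt_sumRate_smul (hA : ∀ j, 0 < A j) (hσ : ∀ j, 0 < σsq j)
    {g : Fin K → Fin K → ℝ} (hg : ∀ j i, 0 ≤ g j i) (hsig : ∃ j, 0 < g j j) {c : ℝ}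
    (hc : 1 < c) : sumRate A σsq g < sumRate A σsq (c • g) := by
  have hinterf : ∀ j, 0 ≤ ∑ i ∈ univ.erase j, A i * g j i := fun j =>
    sum_nonneg fun i _ => mul_nonneg (hA i).le (hg j i)
  have hscale : ∀ j, A j * (c • g) j j / (∑ i ∈ univ.erase j, A i * (c • g) j i + σsq j) =
      c * (A j * g j j) / (c * ∑ i ∈ univ.erase j, A i * g j i + σsq j) := by
    intro j
    simp only [Pi.smul_apply, smul_eq_mul, mul_sum, mul_left_comm c]
  have harg : ∀ j, 0 < 1 + A j * g j j / (∑ i ∈ univ.erase j, A i * g j i + σsq j) := fun j =>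
    add_pos_of_pos_of_nonneg one_pos <|
      div_nonneg (mul_nonneg (hA j).le (hg j j)) (add_nonneg (hinterf j) (hσ j).le)
  obtain ⟨j₀, hj₀⟩ := hsig
  refine sum_lt_sum (fun j _ => ?_) ⟨j₀, mem_univ j₀, ?_⟩
  · rw [hscale]
    refine Real.logb_le_logb_of_le one_lt_two (harg j) (add_le_add_right ?_ 1)
    exact div_add_le_mul_div_mul_add hc.le (mul_nonneg (hA j).le (hg j j)) (hinterf j) (hσ j)
  · rw [hscale]
    refine Real.logb_lt_logb one_lt_two (harg j₀) (add_lt_add_right ?_ 1)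
    exact div_add_lt_mul_div_mul_add hc (mul_pos (hA j₀) hj₀) (hinterf j₀) (hσ j₀)

end SumRate

section Orthogonal

variable {E : Type*} [NormedAddCommGroup E]

lemma norm_sqrt_smul_sq [InnerProductSpace ℂ E] {c : ℝ} (hc : 0 ≤ c) (x : E) :
    ‖((√c : ℝ) : ℂ) • x‖ ^ 2 = c * ‖x‖ ^ 2 := by
  rw [norm_smul, Complex.norm_real, Real.norm_eq_abs, abs_of_nonneg (Real.sqrt_nonneg c),
    mul_pow, Real.sq_sqrt hc]

lemma norm_inner_sqrt_smul_sq [InnerProductSpace ℂ E] {c : ℝ} (hc : 0 ≤ c) (x y : E) :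
    ‖⟪x, ((√c : ℝ) : ℂ) • y⟫_ℂ‖ ^ 2 = c * ‖⟪x, y⟫_ℂ‖ ^ 2 := by
  rw [inner_smul_right, norm_mul, Complex.norm_real, Real.norm_eq_abs,
    abs_of_nonneg (Real.sqrt_nonneg c), mul_pow, Real.sq_sqrt hc]

lemma sum_norm_sq_lt_of_orthogonal {𝕜 ι : Type*} [RCLike 𝕜] [InnerProductSpace 𝕜 E] [Fintype ι]
    {v p q : ι → E} (hdecomp : ∀ k, v k = p k + q k)
    (horth : ∀ k, ⟪p k, q k⟫_𝕜 = 0) {k₀ : ι} (hk₀ : q k₀ ≠ 0) :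
    ∑ k, ‖p k‖ ^ 2 < ∑ k, ‖v k‖ ^ 2 := by
  have hpyth : ∀ k, ‖v k‖ ^ 2 = ‖p k‖ ^ 2 + ‖q k‖ ^ 2 := fun k => by
    simpa only [hdecomp k, sq] using
      norm_add_sq_eq_norm_sq_add_norm_sq_of_inner_eq_zero _ _ (horth k)
  refine sum_lt_sum (fun k _ => ?_) ⟨k₀, mem_univ k₀, ?_⟩
  · rw [hpyth k]; exact le_add_of_nonneg_right (sq_nonneg _)
  · rw [hpyth k₀]; exact lt_add_of_pos_right _ (by positivity)

end Orthogonal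

theorem stmt_4_general {H : Type*} [NormedAddCommGroup H] [InnerProductSpace ℂ H]
    {K : ℕ} (h : Fin K → H) (v p q : Fin K → H)
    (A σsq : Fin K → ℝ) (hA : ∀ j, 0 < A j) (hσ : ∀ j, 0 < σsq j)
    (P : ℝ)
    (hpow : ∑ k, ‖v k‖ ^ 2 = P)
    (hdecomp : ∀ k, v k = p k + q k)
    (hp : ∀ k, p k ∈ Submodule.span ℂ (Set.range h))
    (hq : ∀ k, q k ∈ (Submodule.span ℂ (Set.range h))ᗮ)
    (k₀ : Fin K) (hk₀ : v k₀ ∉ Submodule.span ℂ (Set.range h))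
    (hsig : ∃ j, ⟪h j, p j⟫_ℂ ≠ 0) :
    ∃ w : Fin K → H, ∑ k, ‖w k‖ ^ 2 = P ∧
      (∑ j, Real.logb 2 (1 + A j * ‖⟪h j, w j⟫_ℂ‖ ^ 2 /
        (∑ i ∈ Finset.univ.erase j, A i * ‖⟪h j, w i⟫_ℂ‖ ^ 2 + σsq j))) >
      (∑ j, Real.logb 2 (1 + A j * ‖⟪h j, v j⟫_ℂ‖ ^ 2 /
        (∑ i ∈ Finset.univ.erase j, A i * ‖⟪h j, v i⟫_ℂ‖ ^ 2 + σsq j))) := by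
  obtain ⟨j₀, hj₀⟩ := hsig
  have hvp : ∀ j i, ⟪h j, v i⟫_ℂ = ⟪h j, p i⟫_ℂ := fun j i => by
    rw [hdecomp i, inner_add_right, add_eq_left]
    exact Submodule.inner_right_of_mem_orthogonal
      (Submodule.subset_span (Set.mem_range_self j)) (hq i)
  have hq₀ : q k₀ ≠ 0 := fun h0 => hk₀ (by simpa [hdecomp k₀, h0] using hp k₀)
  set T := ∑ k, ‖p k‖ ^ 2
  have hpj₀ : p j₀ ≠ 0 := fun h0 => hj₀ (by rw [h0, inner_zero_right])
  have hT : 0 < T := lt_of_lt_of_le (by positivity)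
    (single_le_sum (f := fun k => ‖p k‖ ^ 2) (fun k _ => sq_nonneg _) (mem_univ j₀))
  have hTP : T < P := hpow ▸ sum_norm_sq_lt_of_orthogonal (𝕜 := ℂ) hdecomp
    (fun k => Submodule.inner_right_of_mem_orthogonal (hp k) (hq k)) hq₀
  have hc : 1 < P / T := (one_lt_div hT).2 hTP
  refine ⟨fun k => ((√(P / T) : ℝ) : ℂ) • p k, ?_, ?_⟩
  · simp only [norm_sqrt_smul_sq (by positivity : 0 ≤ P / T), ← mul_sum]
    exact div_mul_cancel₀ P hT.ne'
  · simp only [norm_inner_sqrt_smul_sq (by positivity : 0 ≤ P / T), ← hvp]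
    exact sumRate_lt_sumRate_smul hA hσ (fun j i => sq_nonneg ‖⟪h j, v i⟫_ℂ‖)
      ⟨j₀, by rw [hvp]; positivity⟩ hc

/-- Proposition 1 (abstract Hilbert-space form): a feasible tuple of current
distributions with a component outside the channel subspace is strictly
suboptimal for sum spectral efficiency under the total power constraint.
The vector `p k` is the orthogonal projection of `v k` onto the channel
subspace `S = span {h 1, …, h K}`, characterized by the decomposition
`v k = p k + q k`, `p k ∈ S`, `q k ∈ Sᗮ`. -/
theorem stmt_4 {H : Type*} [NormedAddCommGroup H] [InnerProductSpace ℂ H]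
    {K : ℕ} (h : Fin K → H) (v p q : Fin K → H)
    (A σsq : Fin K → ℝ) (hA : ∀ j, 0 < A j) (hσ : ∀ j, 0 < σsq j)
    (P : ℝ) (hP : 0 < P)
    (hpow : ∑ k, ‖v k‖ ^ 2 = P)
    (hdecomp : ∀ k, v k = p k + q k)
    (hp : ∀ k, p k ∈ Submodule.span ℂ (Set.range h))
    (hq : ∀ k, q k ∈ (Submodule.span ℂ (Set.range h))ᗮ)
    (k₀ : Fin K) (hk₀ : v k₀ ∉ Submodule.span ℂ (Set.range h))
    (hsig : ∃ j, ⟪h j, p j⟫_ℂ ≠ 0) :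
    ∃ w : Fin K → H, ∑ k, ‖w k‖ ^ 2 = P ∧
      (∑ j, Real.logb 2 (1 + A j * ‖⟪h j, w j⟫_ℂ‖ ^ 2 /
        (∑ i ∈ Finset.univ.erase j, A i * ‖⟪h j, w i⟫_ℂ‖ ^ 2 + σsq j))) >
      (∑ j, Real.logb 2 (1 + A j * ‖⟪h j, v j⟫_ℂ‖ ^ 2 /
        (∑ i ∈ Finset.univ.erase j, A i * ‖⟪h j, v i⟫_ℂ‖ ^ 2 + σsq j))) :=
  stmt_4_general h v p q A σsq hA hσ P hpow hdecomp hp hq k₀ hk₀ hsig
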